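/- For every nonnegative integer n and all real (or polynomial variables) y and z, ∑_{r=0}^{n} w̃_{n,r}(y)·z^r = ∑_{r=0}^{n} C(n,r)·φ_r((z−1)·y)·w_{n−r}(y), and also ∑_{r=0}^{n} w̃_{n,r}(y)·z^r = ∑_{r=0}^{n} C(n,r)·φ_r(z·y)·w̃_{n−r}(y). -/

import Mathlib

/-- Stirling numbers of the second kind. -/
def stirling2 : ℕ → ℕ → ℕ
  | 0, 0 => 1
  | 0, _ + 1 => 0
  | _ + 1, 0 => 0
  | n + 1, k + 1 => (k + 1) * stirling2 n (k + 1) + stirling2 n k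

/-- Derangement numbers `d_n = n! ∑_{i=0}^n (-1)^i / i!`. -/
noncomputable def derang (n : ℕ) : ℝ :=
  (n.factorial : ℝ) * ∑ i ∈ Finset.range (n + 1), (-1 : ℝ) ^ i / (i.factorial : ℝ)

/-- Partial derangement numbers `d_{n,r}`. -/
noncomputable def pderang (n r : ℕ) : ℝ :=
  if r ≤ n then (n.choose r : ℝ) * derang (n - r) else 0

/-- Partial deranged Bell polynomials `w̃_{n,r}(y)`. -/
noncomputable def pdbPoly (n r : ℕ) (y : ℝ) : ℝ :=
  ∑ k ∈ Finset.range (n + 1), (stirling2 n k : ℝ) * pderang k r * y ^ k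

/-- Exponential polynomials `φ_n(y) = ∑_{k=0}^n {n brace k} y^k`. -/
def expPoly (n : ℕ) (y : ℝ) : ℝ :=
  ∑ k ∈ Finset.range (n + 1), (stirling2 n k : ℝ) * y ^ k

/-- Geometric polynomials `w_n(y) = ∑_{k=0}^n {n brace k} k! y^k`. -/
def geomPoly (n : ℕ) (y : ℝ) : ℝ :=
  ∑ k ∈ Finset.range (n + 1), (stirling2 n k : ℝ) * (k.factorial : ℝ) * y ^ k

/-!
Write `α ⋆ β` for the binomial convolution `n ↦ ∑ C(n,i) α_i β_{n-i}` (the product of exponential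
generating functions) and `T α` for the Stirling transform `n ↦ ∑ S(n,k) α_k`, whose exponential
generating function is `A(eˣ - 1)`. Hence `T (α ⋆ β) = T α ⋆ T β`, which is proved by induction on
`n` since `T` turns the shift into a derivation of `⋆`.
The left side is `T` of `k ↦ y^k (z^· ⋆ d)_k`, and `d = (-1)^· ⋆ k!` gives
`z^· ⋆ d = (z - 1)^· ⋆ k!`; both identities then follow by splitting off `y^k` multiplicatively.
-/

open Finset

theorem stirling2_eq_stirlingSecond : stirling2 = Nat.stirlingSecond := by
  funext n k
  induction n generalizing k with
  | zero => cases k <;> rfl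
  | succ n ih => cases k <;> simp [stirling2, Nat.stirlingSecond_succ_succ, ih]

section BinomialConvolution

variable {R : Type*} [CommSemiring R]

def binomConv (α β : ℕ → R) (n : ℕ) : R :=
  ∑ i ∈ range (n + 1), (n.choose i : R) * α i * β (n - i)

@[simp]
theorem binomConv_zero (α β : ℕ → R) : binomConv α β 0 = α 0 * β 0 := by
  simp [binomConv]

theorem binomConv_add_left (α α' β : ℕ → R) :
    binomConv (α + α') β = binomConv α β + binomConv α' β := by
  funext n
  simp only [binomConv, Pi.add_apply, mul_add, add_mul, sum_add_distrib]

theorem binomConv_add_right (α β β' : ℕ → R) :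
    binomConv α (β + β') = binomConv α β + binomConv α β' := by
  funext n
  simp only [binomConv, Pi.add_apply, mul_add, sum_add_distrib]

theorem binomConv_succ (α β : ℕ → R) (n : ℕ) :
    binomConv α β (n + 1) =
      binomConv α (fun k => β (k + 1)) n + binomConv (fun k => α (k + 1)) β n := by
  have h := sum_choose_succ_mul (fun i j => α i * β j) n
  simp only [← mul_assoc] at h
  rw [binomConv, h, binomConv, binomConv]
  congr 1
  refine sum_congr rfl fun i hi => ?_
  rw [Nat.sub_add_comm (mem_range_succ_iff.1 hi)]

theorem natCast_mul_binomConv (α β : ℕ → R) (n : ℕ) :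
    n * binomConv α β n = binomConv (fun k => k * α k) β n + binomConv α (fun k => k * β k) n := by
  simp only [binomConv, mul_sum, ← sum_add_distrib]
  refine sum_congr rfl fun i hi => ?_
  have hn : (n : R) = i + (n - i : ℕ) := by
    rw [← Nat.cast_add, Nat.add_sub_cancel' (mem_range_succ_iff.1 hi)]
  rw [hn]
  ring

theorem binomConv_assoc (α β γ : ℕ → R) :
    binomConv (binomConv α β) γ = binomConv α (binomConv β γ) := by
  funext n
  induction n generalizing α β γ with
  | zero => simp [mul_assoc]
  | succ n ih =>
    have hshift : ∀ α β : ℕ → R, (fun k => binomConv α β (k + 1)) =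
        binomConv α (fun k => β (k + 1)) + binomConv (fun k => α (k + 1)) β :=
      fun α β => funext (binomConv_succ α β)
    rw [binomConv_succ, binomConv_succ, hshift, hshift, binomConv_add_left, binomConv_add_right]
    simp only [Pi.add_apply, ih]
    ring

theorem binomConv_pow (a b : R) : binomConv (a ^ ·) (b ^ ·) = ((a + b) ^ ·) := by
  funext n
  rw [binomConv, add_pow]
  exact sum_congr rfl fun i _ => by ring

theorem binomConv_mul_pow (α β : ℕ → R) (y : R) :
    binomConv (fun k => α k * y ^ k) (fun k => β k * y ^ k) = fun n => binomConv α β n * y ^ n := by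
  funext n
  rw [binomConv, binomConv, sum_mul]
  refine sum_congr rfl fun i hi => ?_
  rw [← Nat.add_sub_cancel' (mem_range_succ_iff.1 hi), pow_add, Nat.add_sub_cancel_left]
  ring

end BinomialConvolution

section StirlingTransform

variable {R : Type*} [CommSemiring R]

def stirlingTransform (α : ℕ → R) (n : ℕ) : R :=
  ∑ k ∈ range (n + 1), (stirling2 n k : R) * α k

/-- On exponential generating functions this is the derivation `(1 + x) d/dx`. -/
def stirlingDeriv (α : ℕ → R) (k : ℕ) : R :=
  k * α k + α (k + 1)

@[simp]
theorem stirlingTransform_zero (α : ℕ → R) : stirlingTransform α 0 = α 0 := by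
  simp [stirlingTransform, stirling2]

theorem stirlingTransform_add (α β : ℕ → R) :
    stirlingTransform (α + β) = stirlingTransform α + stirlingTransform β := by
  funext n
  simp only [stirlingTransform, Pi.add_apply, mul_add, sum_add_distrib]

theorem stirlingTransform_succ (α : ℕ → R) (n : ℕ) :
    stirlingTransform α (n + 1) = stirlingTransform (stirlingDeriv α) n := by
  have hlast : stirling2 n (n + 1) = 0 := by
    rw [stirling2_eq_stirlingSecond, Nat.stirlingSecond_eq_zero_of_lt n.lt_succ_self]
  have hshift : ∑ k ∈ range (n + 1), ((k + 1 : ℕ) : R) * stirling2 n (k + 1) * α (k + 1) =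
      ∑ k ∈ range (n + 1), (stirling2 n k : R) * (k * α k) := by
    rw [sum_range_succ, hlast, sum_range_succ']
    simp only [Nat.cast_zero, zero_mul, mul_zero, add_zero]
    exact sum_congr rfl fun k _ => by ring
  have hrec : ∀ k, (stirling2 (n + 1) (k + 1) : R) =
      ((k + 1 : ℕ) : R) * stirling2 n (k + 1) + stirling2 n k := fun k => by
    rw [stirling2, Nat.cast_add, Nat.cast_mul]
  rw [stirlingTransform, sum_range_succ', stirlingTransform]
  simp only [hrec, add_mul, sum_add_distrib, hshift, stirlingDeriv, mul_add]
  simp [stirling2]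

theorem stirlingDeriv_binomConv (α β : ℕ → R) :
    stirlingDeriv (binomConv α β) = binomConv (stirlingDeriv α) β + binomConv α (stirlingDeriv β) := by
  funext n
  have hN := natCast_mul_binomConv α β n
  have hS := binomConv_succ α β n
  have hα : stirlingDeriv α = (fun k => k * α k) + (fun k => α (k + 1)) := rfl
  have hβ : stirlingDeriv β = (fun k => k * β k) + (fun k => β (k + 1)) := rfl
  rw [hα, hβ, binomConv_add_left, binomConv_add_right]
  simp only [stirlingDeriv, Pi.add_apply, hN, hS]
  ring

theorem binomConv_stirlingTransform (α β : ℕ → R) :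
    binomConv (stirlingTransform α) (stirlingTransform β) = stirlingTransform (binomConv α β) := by
  funext n
  induction n generalizing α β with
  | zero => simp
  | succ n ih =>
    have hshift : ∀ α : ℕ → R, (fun k => stirlingTransform α (k + 1)) =
        stirlingTransform (stirlingDeriv α) := fun α => funext (stirlingTransform_succ α)
    rw [binomConv_succ, hshift, hshift, ih, ih, ← Pi.add_apply (f := stirlingTransform _),
      ← stirlingTransform_add, stirlingTransform_succ, stirlingDeriv_binomConv, add_comm]

end StirlingTransform

theorem derang_eq_binomConv : derang = binomConv ((-1 : ℝ) ^ ·) (fun k => (k.factorial : ℝ)) := by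
  funext m
  rw [derang, binomConv, mul_sum]
  refine sum_congr rfl fun i hi => ?_
  rw [Nat.cast_choose ℝ (mem_range_succ_iff.1 hi)]
  field_simp

theorem binomConv_pow_derang (z : ℝ) :
    binomConv (z ^ ·) derang = binomConv ((z - 1) ^ ·) (fun k => (k.factorial : ℝ)) := by
  rw [derang_eq_binomConv, ← binomConv_assoc, binomConv_pow, sub_eq_add_neg]

theorem sum_pderang_mul_pow {k m : ℕ} (hk : k ≤ m) (z : ℝ) :
    ∑ r ∈ range (m + 1), pderang k r * z ^ r = binomConv (z ^ ·) derang k := by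
  rw [binomConv, ← sum_subset (range_subset_range.2 (Nat.succ_le_succ hk))]
  · refine sum_congr rfl fun r hr => ?_
    rw [pderang, if_pos (mem_range_succ_iff.1 hr)]
    ring
  · intro r _ hr
    rw [pderang, if_neg (by simpa using hr), zero_mul]

theorem sum_pdbPoly_mul_pow (n : ℕ) (y z : ℝ) :
    ∑ r ∈ range (n + 1), pdbPoly n r y * z ^ r =
      stirlingTransform (fun k => binomConv (z ^ ·) derang k * y ^ k) n := by
  simp only [pdbPoly, stirlingTransform, sum_mul]
  rw [sum_comm]
  refine sum_congr rfl fun k hk => ?_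
  rw [← sum_pderang_mul_pow (mem_range_succ_iff.1 hk), sum_mul, mul_sum]
  exact sum_congr rfl fun r _ => by ring

theorem expPoly_mul (n : ℕ) (x y : ℝ) :
    expPoly n (x * y) = stirlingTransform (fun k => x ^ k * y ^ k) n := by
  simp only [expPoly, stirlingTransform, mul_pow]

theorem geomPoly_eq_stirlingTransform (n : ℕ) (y : ℝ) :
    geomPoly n y = stirlingTransform (fun k => (k.factorial : ℝ) * y ^ k) n := by
  simp only [geomPoly, stirlingTransform, mul_assoc]

theorem pdbPoly_zero_right (n : ℕ) (y : ℝ) :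
    pdbPoly n 0 y = stirlingTransform (fun k => derang k * y ^ k) n := by
  simp only [pdbPoly, stirlingTransform, pderang, if_pos (Nat.zero_le _), Nat.choose_zero_right,
    Nat.sub_zero, Nat.cast_one, one_mul, mul_assoc]

/-- `∑_{r=0}^n w̃_{n,r}(y) z^r = ∑_{r=0}^n C(n,r) φ_r((z-1)y) w_{n-r}(y)` and
`∑_{r=0}^n w̃_{n,r}(y) z^r = ∑_{r=0}^n C(n,r) φ_r(zy) w̃_{n-r}(y)`. -/
theorem sum_pdbPoly_mul_pow_eq (n : ℕ) (y z : ℝ) :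
    (∑ r ∈ Finset.range (n + 1), pdbPoly n r y * z ^ r =
      ∑ r ∈ Finset.range (n + 1),
        (n.choose r : ℝ) * expPoly r ((z - 1) * y) * geomPoly (n - r) y) ∧
    (∑ r ∈ Finset.range (n + 1), pdbPoly n r y * z ^ r =
      ∑ r ∈ Finset.range (n + 1),
        (n.choose r : ℝ) * expPoly r (z * y) * pdbPoly (n - r) 0 y) := by
  simp only [sum_pdbPoly_mul_pow, expPoly_mul, geomPoly_eq_stirlingTransform, pdbPoly_zero_right]
  constructor
  · rw [binomConv_pow_derang, ← binomConv_mul_pow, ← binomConv_stirlingTransform, binomConv]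
  · rw [← binomConv_mul_pow, ← binomConv_stirlingTransform, binomConv]
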